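/- arXiv:1607.00809 — 2 statements merged into one kernel-verified Lean document; each statement's English description precedes it below -/
import Mathlib

section
/- If f : ℝ → ℝ is convex, even, and differentiable, and f(v) = |v| for |v| ≥ ρ, then f'(v) · v ≥ |v| - ρ for all v ∈ ℝ. -/
/-- Lemma 6 (second inequality): for the smoothed absolute value `f`
(convex, even, differentiable, equal to `|·|` outside `[-ρ, ρ]`),
we have `f'(v) · v ≥ |v| - ρ` for all `v`. -/
theorem smoothed_abs_deriv_mul (ρ : ℝ) (hρ : 0 < ρ) (f : ℝ → ℝ)
    (hconv : ConvexOn ℝ Set.univ f)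
    (heven : ∀ v : ℝ, f v = f (-v))
    (hdiff : Differentiable ℝ f)
    (habs : ∀ v : ℝ, ρ ≤ |v| → f v = |v|) :
    ∀ v : ℝ, |v| - ρ ≤ deriv f v * v := by
  -- f 0 is the minimum
  have hmin : ∀ x : ℝ, f 0 ≤ f x := by
    intro x
    have h := hconv.2 (Set.mem_univ x) (Set.mem_univ (-x))
      (by norm_num : (0:ℝ) ≤ 1/2) (by norm_num : (0:ℝ) ≤ 1/2) (by norm_num)
    rw [← heven x] at h
    simp only [smul_eq_mul] at h
    have hx : (1/2 : ℝ) * x + (1/2 : ℝ) * (-x) = 0 := by ring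
    rw [hx] at h
    linarith
  have hf0 : f 0 ≤ ρ := by
    have h1 := hmin ρ
    rw [habs ρ (le_of_eq (abs_of_pos hρ).symm), abs_of_pos hρ] at h1
    exact h1
  -- tangent inequality: f v - f 0 ≤ deriv f v * v
  have htan : ∀ v : ℝ, f v - f 0 ≤ deriv f v * v := by
    intro v
    rcases lt_trichotomy v 0 with hv | hv | hv
    · have h := hconv.deriv_le_slope (Set.mem_univ v) (Set.mem_univ 0) hv (hdiff v)
      rw [slope_def_field] at h
      have : (f 0 - f v) / (0 - v) = (f 0 - f v) / (-v) := by ring_nf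
      rw [this] at h
      have hvpos : 0 < -v := by linarith
      have h2 := (le_div_iff₀ hvpos).mp h
      nlinarith
    · simp [hv]
    · have h := hconv.slope_le_deriv (Set.mem_univ 0) (Set.mem_univ v) hv (hdiff v)
      rw [slope_def_field] at h
      have : (f v - f 0) / (v - 0) = (f v - f 0) / v := by ring_nf
      rw [this] at h
      have := (div_le_iff₀ hv).mp h
      linarith
  intro v
  rcases le_or_gt ρ |v| with h | h
  · have hfv : f v = |v| := habs v h
    have := htan v
    linarith
  · have := htan v
    have := hmin v
    linarith
end

section
/- Let H be a real Hilbert space, K ⊆ H a closed convex set, and let z : [0,T] → H be absolutely continuous (with derivative ż a.e.) such that v(t) ∈ K for all t ∈ [0,T] and ż(t) ∈ N_K(v(t)) for a.e. t, where v : [0,T] → H is differentiable a.e. Then ⟨ż(t), v̇(t)⟩ = 0 for a.e. t ∈ (0,T). -/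
open MeasureTheory RealInnerProductSpace

/-- Orthogonality (energy equality): if `ż(t)` lies in the normal cone of the
closed convex set `K` at `v(t) ∈ K` for a.e. `t`, and `z, v` are a.e.
differentiable with derivatives `ż, v̇`, then `⟨ż(t), v̇(t)⟩ = 0` a.e. -/
theorem normal_cone_orthogonality
    {H : Type*} [NormedAddCommGroup H] [InnerProductSpace ℝ H]
    (K : Set H) (hKcl : IsClosed K) (hKconv : Convex ℝ K)
    (T : ℝ) (hT : 0 < T) (z v zdot vdot : ℝ → H)
    (hz : ∀ᵐ t ∂(volume.restrict (Set.Ioo 0 T)), HasDerivAt z (zdot t) t)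
    (hv : ∀ᵐ t ∂(volume.restrict (Set.Ioo 0 T)), HasDerivAt v (vdot t) t)
    (hvK : ∀ t ∈ Set.Icc (0:ℝ) T, v t ∈ K)
    (hNC : ∀ᵐ t ∂(volume.restrict (Set.Ioo 0 T)),
      ∀ k ∈ K, ⟪zdot t, k - v t⟫ ≤ 0) :
    ∀ᵐ t ∂(volume.restrict (Set.Ioo 0 T)), ⟪zdot t, vdot t⟫ = 0 := by
  have hmem : ∀ᵐ t ∂(volume.restrict (Set.Ioo 0 T)), t ∈ Set.Ioo 0 T :=
    ae_restrict_mem measurableSet_Ioo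
  filter_upwards [hv, hNC, hmem] with t hvt hNCt ht
  -- g s = ⟪zdot t, v s⟫ has a local max at t and derivative ⟪zdot t, vdot t⟫
  set g : ℝ → ℝ := fun s => ⟪zdot t, v s⟫ with hg
  have hderiv : HasDerivAt g ⟪zdot t, vdot t⟫ t :=
    (innerSL ℝ (zdot t)).hasFDerivAt.comp_hasDerivAt t hvt
  have hmax : IsLocalMax g t := by
    have hnhds : Set.Icc (0:ℝ) T ∈ nhds t :=
      Icc_mem_nhds ht.1 ht.2
    filter_upwards [hnhds] with s hs
    have : ⟪zdot t, v s - v t⟫ ≤ 0 := hNCt (v s) (hvK s hs)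
    simpa [g, inner_sub_right] using this
  exact hmax.hasDerivAt_eq_zero hderiv
end
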